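/- If G is a permutation graph, then the threshold dimension of G satisfies t(G) ≤ α(G), where α(G) is the cardinality of a maximum independent set of G; that is, there exist α(G) threshold graphs on V(G) whose edge sets have union equal to E(G). -/

import Mathlib

/-- The permutation graph `G[Π]` on `Fin n`: `i ~ j` iff `(i-j)(Π⁻¹ i - Π⁻¹ j) < 0`. -/
def permGraph (n : ℕ) (π : Equiv.Perm (Fin n)) : SimpleGraph (Fin n) where
  Adj i j := ((i : ℤ) - (j : ℤ)) * ((π.symm i : ℤ) - ((π.symm j : ℤ))) < 0
  symm := by
    constructor
    intro i j h
    have e : ((j : ℤ) - (i : ℤ)) * ((π.symm j : ℤ) - (π.symm i : ℤ))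
        = ((i : ℤ) - (j : ℤ)) * ((π.symm i : ℤ) - (π.symm j : ℤ)) := by ring
    simp only [e]
    exact h
  loopless := by constructor; intro i; simp

/-- A set of vertices is stable (independent) if no two of its members are adjacent. -/
def IsStableSet {V : Type*} (G : SimpleGraph V) (s : Set V) : Prop :=
  s.Pairwise fun a b => ¬ G.Adj a b

/-- A finite graph is a threshold graph if there are nonnegative vertex weights and a
threshold `t` such that a set of vertices is stable iff its total weight is at most `t`. -/
def IsThresholdGraph {V : Type*} [Fintype V] (G : SimpleGraph V) : Prop :=
  ∃ (w : V → ℝ) (t : ℝ), (∀ v, 0 ≤ w v) ∧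
    ∀ U : Finset V, ((∑ v ∈ U, w v) ≤ t ↔ IsStableSet G ↑U)

/-- A graph is a permutation graph if it is isomorphic to `permGraph n π` for some
permutation `π` of `Fin n`. -/
def IsPermutationGraph {V : Type*} (G : SimpleGraph V) : Prop :=
  ∃ (n : ℕ) (π : Equiv.Perm (Fin n)), Nonempty (G ≃g permGraph n π)

/-- The threshold dimension of `G`: the least `k` such that the edge set of `G` is the
union of the edge sets of `k` threshold graphs on `V(G)`. -/
noncomputable def thresholdDim {V : Type*} [Fintype V] (G : SimpleGraph V) : ℕ :=
  sInf {k | ∃ T : Fin k → SimpleGraph V,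
    (∀ i, IsThresholdGraph (T i)) ∧ (⋃ i, (T i).edgeSet) = G.edgeSet}

/-- The independence number `α(G)`. -/
noncomputable def alphaNum {V : Type*} [Fintype V] (G : SimpleGraph V) : ℕ :=
  sSup {k | ∃ s : Finset V, s.card = k ∧ IsStableSet G ↑s}

/-- The graph `mK₂`: a perfect matching on `2m` vertices. -/
def matchingGraph (m : ℕ) : SimpleGraph (Fin m × Bool) where
  Adj a b := a.1 = b.1 ∧ a.2 ≠ b.2
  symm := by constructor; rintro a b ⟨h1, h2⟩; exact ⟨h1.symm, h2.symm⟩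
  loopless := by constructor; rintro a ⟨h1, h2⟩; exact h2 rfl

/-!
Write `σ = π⁻¹`. Two vertices of `permGraph n π` are non-adjacent iff they are comparable in the
dominance order (`j < i ∧ σ j < σ i`), so stable sets are chains. The height of a vertex (the
number of vertices below it on a longest chain) is less than `α` and strictly increasing along
the order, so each level is an antichain, i.e. a clique. Give each edge the height of its left
endpoint. The edges of height `k` form a split graph: the clique of level `k` together with an
independent set, and since `σ` decreases along the level, every other vertex sees an initial
segment of the level. Split graphs with nested neighbourhoods are threshold graphs: weigh a
vertex outside the clique by `(|V| + 1) ^ (number of its neighbours in the clique)`.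
-/

open Finset

lemma sum_pow_lt_pow {ι : Type*} {s : Finset ι} {f : ι → ℕ} {b k : ℕ} (hb : #s < b)
    (hf : ∀ i ∈ s, f i < k) : ∑ i ∈ s, b ^ f i < b ^ k := by
  rcases k with _ | k
  · simp [eq_empty_of_forall_notMem fun i hi => Nat.not_lt_zero _ (hf i hi)]
  · calc ∑ i ∈ s, b ^ f i ≤ #s * b ^ k := by
          simpa using sum_le_card_nsmul s _ _ fun i hi =>
            Nat.pow_le_pow_right (by omega) (Nat.lt_succ_iff.1 (hf i hi))
      _ < b * b ^ k := Nat.mul_lt_mul_of_pos_right hb (pow_pos (by omega) k)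
      _ = b ^ (k + 1) := (pow_succ' b k).symm

section StableSet

variable {V W : Type*} {G : SimpleGraph V} {H : SimpleGraph W}

lemma IsStableSet.insert {s : Set V} {a : V} (hs : IsStableSet G s)
    (ha : ∀ b ∈ s, ¬G.Adj a b) : IsStableSet G (insert a s) :=
  Set.pairwise_insert.2 ⟨hs, fun b hb _ => ⟨ha b hb, fun h => ha b hb h.symm⟩⟩

lemma isStableSet_map_iff (e : G ≃g H) (U : Finset V) :
    IsStableSet H ↑(U.map e.toEquiv.toEmbedding) ↔ IsStableSet G ↑U := by
  rw [coe_map, IsStableSet, IsStableSet, e.toEquiv.toEmbedding.injective.injOn.pairwise_image]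
  change (U : Set V).Pairwise (fun a b => ¬H.Adj (e a) (e b)) ↔ _
  simp only [e.map_adj_iff]

lemma card_le_alphaNum [Fintype V] {s : Finset V} (hs : IsStableSet G ↑s) :
    #s ≤ alphaNum G :=
  le_csSup ⟨Fintype.card V, fun _ ⟨t, ht, _⟩ => ht ▸ card_le_univ t⟩ ⟨s, rfl, hs⟩

lemma alphaNum_congr [Fintype V] [Fintype W] (e : G ≃g H) : alphaNum G = alphaNum H := by
  unfold alphaNum
  congr 1
  ext k
  constructor
  · rintro ⟨s, rfl, hs⟩
    exact ⟨s.map e.toEquiv.toEmbedding, card_map _, (isStableSet_map_iff e s).2 hs⟩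
  · rintro ⟨s, rfl, hs⟩
    exact ⟨s.map e.symm.toEquiv.toEmbedding, card_map _, (isStableSet_map_iff e.symm s).2 hs⟩

end StableSet

section Threshold

variable {V W : Type*} [Fintype V] [Fintype W] {G : SimpleGraph V} {H : SimpleGraph W}

lemma IsThresholdGraph.of_iso (e : G ≃g H) (h : IsThresholdGraph H) : IsThresholdGraph G := by
  obtain ⟨w, t, hw, hU⟩ := h
  refine ⟨w ∘ e, t, fun v => hw (e v), fun U => ?_⟩
  rw [← isStableSet_map_iff e, ← hU, sum_map]
  rfl

lemma exists_thresholdCover_of_iso (e : G ≃g H) {k : ℕ} (T : Fin k → SimpleGraph W)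
    (hT : ∀ i, IsThresholdGraph (T i)) (hcover : ⋃ i, (T i).edgeSet = H.edgeSet) :
    ∃ T' : Fin k → SimpleGraph V,
      (∀ i, IsThresholdGraph (T' i)) ∧ ⋃ i, (T' i).edgeSet = G.edgeSet := by
  refine ⟨fun i => (T i).comap e, fun i => (hT i).of_iso (SimpleGraph.Iso.comap e.toEquiv _), ?_⟩
  rw [← SimpleGraph.edgeSet_iSup, SimpleGraph.edgeSet_inj] at hcover ⊢
  ext u v
  simp [← e.map_adj_iff, ← hcover]

lemma thresholdDim_congr (e : G ≃g H) : thresholdDim G = thresholdDim H := by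
  unfold thresholdDim
  congr 1
  ext k
  exact ⟨fun ⟨T, hT, hcover⟩ => exists_thresholdCover_of_iso e.symm T hT hcover,
    fun ⟨T, hT, hcover⟩ => exists_thresholdCover_of_iso e T hT hcover⟩

end Threshold

section Split

variable {V : Type*} [Fintype V] [DecidableEq V] {G : SimpleGraph V}

lemma isThresholdGraph_of_split [DecidableRel G.Adj] (A : Finset V) (hA : G.IsClique ↑A)
    (hB : IsStableSet G ↑Aᶜ) (w : V → ℝ) (hw : ∀ v, 0 ≤ w v)
    (hdom : ∀ p ∈ A, ∀ u ∉ A, G.Adj p u → ∑ v ∈ Aᶜ with ¬G.Adj p v, w v < w u) :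
    IsThresholdGraph G := by
  set S := ∑ v ∈ Aᶜ, w v
  set σ : V → ℝ := fun p => ∑ v ∈ Aᶜ with ¬G.Adj p v, w v
  have hσ₀ : ∀ p, 0 ≤ σ p := fun p => sum_nonneg fun v _ => hw v
  have hσS : ∀ p, σ p ≤ S := fun p =>
    sum_le_sum_of_subset_of_nonneg (filter_subset _ _) fun v _ _ => hw v
  -- `t - σ p` leaves exactly the room of the stable sets through `p`; `t > 2 * S` makes any two
  -- clique vertices together too heavy
  set t := 2 * S + 1
  set w' : V → ℝ := fun v => if v ∈ A then t - σ v else w v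
  have hw' : ∀ v, 0 ≤ w' v := fun v => by
    by_cases hv : v ∈ A
    · simp only [w', if_pos hv]; linarith [hσS v, hσ₀ v]
    · simp only [w', if_neg hv]; exact hw v
  refine ⟨w', t, hw', fun U => ⟨fun hU => ?_, fun hU => ?_⟩⟩
  · by_contra hns
    obtain ⟨x, hx, y, hy, hxy, hadj⟩ : ∃ x ∈ U, ∃ y ∈ U, x ≠ y ∧ G.Adj x y := by
      simpa [IsStableSet, Set.Pairwise] using hns
    have hpair : w' x + w' y ≤ ∑ v ∈ U, w' v := by
      rw [← sum_pair hxy]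
      exact sum_le_sum_of_subset_of_nonneg (by simp [insert_subset_iff, hx, hy])
        fun v _ _ => hw' v
    have hedge : t < w' x + w' y := by
      by_cases hxA : x ∈ A <;> by_cases hyA : y ∈ A <;>
        simp only [w', hxA, hyA, if_true, if_false]
      · linarith [hσS x, hσS y]
      · linarith [hdom x hxA y hyA hadj]
      · linarith [hdom y hyA x hxA hadj.symm]
      · exact absurd hadj (hB (by simpa using hxA) (by simpa using hyA) hxy)
    linarith
  · by_cases hUA : ∃ p ∈ U, p ∈ A
    · obtain ⟨p, hpU, hpA⟩ := hUA
      have hrest : U.erase p ⊆ {v ∈ Aᶜ | ¬G.Adj p v} := by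
        intro u hu
        obtain ⟨hup, huU⟩ := mem_erase.1 hu
        have hpu : ¬G.Adj p u := hU hpU huU (Ne.symm hup)
        have huA : u ∉ A := fun huA => hpu (hA hpA huA (Ne.symm hup))
        simp [huA, hpu]
      have hsum : ∑ v ∈ U.erase p, w' v ≤ σ p := by
        rw [sum_congr rfl fun u hu => if_neg (mem_compl.1 (mem_filter.1 (hrest hu)).1)]
        exact sum_le_sum_of_subset_of_nonneg hrest fun v _ _ => hw v
      rw [← add_sum_erase U w' hpU]
      simp only [w', if_pos hpA] at hsum ⊢
      linarith
    · push Not at hUA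
      have hUB : U ⊆ Aᶜ := fun u hu => mem_compl.2 (hUA u hu)
      rw [sum_congr rfl fun u hu => if_neg (hUA u hu)]
      linarith [sum_le_sum_of_subset_of_nonneg hUB fun v _ _ => hw v,
        sum_nonneg fun v (_ : v ∈ Aᶜ) => hw v]

lemma isThresholdGraph_of_nested (A : Finset V) (hA : G.IsClique ↑A) (hB : IsStableSet G ↑Aᶜ)
    (hnest : ∀ p ∈ A, ∀ q ∈ A, ∀ u ∉ A, ∀ v ∉ A,
      G.Adj p u → G.Adj q v → G.Adj p v ∨ G.Adj q u) :
    IsThresholdGraph G := by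
  classical
  let m : V → ℕ := fun u => #{p ∈ A | G.Adj u p}
  refine isThresholdGraph_of_split A hA hB (fun v => ((Fintype.card V + 1) ^ m v : ℕ))
    (fun v => Nat.cast_nonneg _) fun p hp u hu hpu => ?_
  have hlt : ∀ v ∈ {v ∈ Aᶜ | ¬G.Adj p v}, m v < m u := by
    intro v hv
    obtain ⟨hv, hpv⟩ := mem_filter.1 hv
    refine card_lt_card ((ssubset_iff_of_subset fun q hq => ?_).2 ⟨p, ?_, ?_⟩)
    · obtain ⟨hq, hvq⟩ := mem_filter.1 hq
      have := hnest p hp q hq u hu v (mem_compl.1 hv) hpu hvq.symm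
      exact mem_filter.2 ⟨hq, (this.resolve_left hpv).symm⟩
    · exact mem_filter.2 ⟨hp, hpu.symm⟩
    · exact fun h => hpv (mem_filter.1 h).2.symm
  exact_mod_cast sum_pow_lt_pow ((card_le_univ _).trans_lt (Nat.lt_succ_self _)) hlt

end Split

lemma permGraph_adj_iff {n : ℕ} (π : Equiv.Perm (Fin n)) (i j : Fin n) :
    (permGraph n π).Adj i j ↔
      (i < j ∧ π.symm j < π.symm i) ∨ (j < i ∧ π.symm i < π.symm j) := by
  change ((i : ℤ) - j) * ((π.symm i : ℤ) - π.symm j) < 0 ↔ _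
  simp only [mul_neg_iff, sub_pos, sub_neg, Nat.cast_lt, Fin.val_fin_lt]
  tauto

section Height

variable {n : ℕ} (π : Equiv.Perm (Fin n))

def dominated (i : Fin n) : Finset (Fin n) := {j | j < i ∧ π.symm j < π.symm i}

variable {π} in
lemma mem_dominated {i j : Fin n} : j ∈ dominated π i ↔ j < i ∧ π.symm j < π.symm i := by
  simp [dominated]

lemma dominated_subset {i j : Fin n} (h : j ∈ dominated π i) : dominated π j ⊆ dominated π i :=
  fun _ hl => mem_dominated.2 ⟨(mem_dominated.1 hl).1.trans (mem_dominated.1 h).1,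
    (mem_dominated.1 hl).2.trans (mem_dominated.1 h).2⟩

lemma isStableSet_insert_of_subset_dominated {i : Fin n} {s : Finset (Fin n)}
    (hs : s ⊆ dominated π i) (hst : IsStableSet (permGraph n π) ↑s) :
    IsStableSet (permGraph n π) ↑(insert i s) := by
  rw [coe_insert]
  refine hst.insert fun j hj => ?_
  obtain ⟨hji, hσ⟩ := mem_dominated.1 (hs hj)
  rw [permGraph_adj_iff]
  rintro (⟨h, -⟩ | ⟨-, h⟩)
  exacts [h.not_gt hji, h.not_gt hσ]

/-- Stable sets of `permGraph n π` are the chains of the dominance order, so this is the number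
of vertices below `i` on a longest chain ending at `i`. -/
noncomputable def dominanceHeight (i : Fin n) : ℕ :=
  open Classical in
  ((dominated π i).powerset.filter fun s : Finset (Fin n) =>
    IsStableSet (permGraph n π) ↑s).sup card

lemma card_le_dominanceHeight {i : Fin n} {s : Finset (Fin n)} (hs : s ⊆ dominated π i)
    (hst : IsStableSet (permGraph n π) ↑s) : #s ≤ dominanceHeight π i := by
  classical
  exact le_sup (f := card) (mem_filter.2 ⟨mem_powerset.2 hs, hst⟩)

lemma exists_isStableSet_card_eq_dominanceHeight (i : Fin n) :
    ∃ s ⊆ dominated π i, IsStableSet (permGraph n π) ↑s ∧ #s = dominanceHeight π i := by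
  classical
  obtain ⟨s, hs, hcard⟩ := exists_mem_eq_sup
    ((dominated π i).powerset.filter fun s : Finset (Fin n) => IsStableSet (permGraph n π) ↑s)
    ⟨∅, mem_filter.2 ⟨empty_mem_powerset _, by simp [IsStableSet]⟩⟩ card
  obtain ⟨hs, hst⟩ := mem_filter.1 hs
  exact ⟨s, mem_powerset.1 hs, hst, hcard.symm⟩

lemma dominanceHeight_lt_alphaNum (i : Fin n) :
    dominanceHeight π i < alphaNum (permGraph n π) := by
  obtain ⟨s, hs, hst, hcard⟩ := exists_isStableSet_card_eq_dominanceHeight π i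
  have hi : i ∉ s := fun hi => (mem_dominated.1 (hs hi)).1.false
  calc dominanceHeight π i < #(insert i s) := by rw [card_insert_of_notMem hi, hcard]; omega
    _ ≤ alphaNum (permGraph n π) :=
        card_le_alphaNum (isStableSet_insert_of_subset_dominated π hs hst)

lemma dominanceHeight_lt_of_mem_dominated {i j : Fin n} (h : j ∈ dominated π i) :
    dominanceHeight π j < dominanceHeight π i := by
  obtain ⟨s, hs, hst, hcard⟩ := exists_isStableSet_card_eq_dominanceHeight π j
  have hj : j ∉ s := fun hj => (mem_dominated.1 (hs hj)).1.false
  calc dominanceHeight π j < #(insert j s) := by rw [card_insert_of_notMem hj, hcard]; omega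
    _ ≤ dominanceHeight π i := card_le_dominanceHeight π
        (insert_subset h ((dominated_subset π h).trans' hs))
        (isStableSet_insert_of_subset_dominated π hs hst)

lemma symm_lt_symm_of_dominanceHeight_eq {p q : Fin n}
    (h : dominanceHeight π p = dominanceHeight π q) (hpq : p < q) : π.symm q < π.symm p := by
  rcases lt_trichotomy (π.symm p) (π.symm q) with hσ | hσ | hσ
  · exact absurd h (dominanceHeight_lt_of_mem_dominated π (mem_dominated.2 ⟨hpq, hσ⟩)).ne
  · exact absurd (π.symm.injective hσ) hpq.ne
  · exact hσ

end Height

section Levels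

variable {n : ℕ} (π : Equiv.Perm (Fin n))

def levelGraph (k : ℕ) : SimpleGraph (Fin n) :=
  .fromRel fun i j => (i < j ∧ π.symm j < π.symm i) ∧ dominanceHeight π i = k

variable {π} in
lemma levelGraph_adj {k : ℕ} {i j : Fin n} :
    (levelGraph π k).Adj i j ↔
      ((i < j ∧ π.symm j < π.symm i) ∧ dominanceHeight π i = k) ∨
        ((j < i ∧ π.symm i < π.symm j) ∧ dominanceHeight π j = k) := by
  rw [levelGraph, SimpleGraph.fromRel_adj, and_iff_right_iff_imp]
  rintro (⟨⟨h, -⟩, -⟩ | ⟨⟨h, -⟩, -⟩)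
  exacts [h.ne, h.ne']

lemma isThresholdGraph_levelGraph (k : ℕ) : IsThresholdGraph (levelGraph π k) := by
  classical
  set A : Finset (Fin n) := {p | dominanceHeight π p = k}
  have hA {p : Fin n} : p ∈ A ↔ dominanceHeight π p = k := by simp [A]
  have hcross {p u : Fin n} (hp : p ∈ A) (hu : u ∉ A) :
      (levelGraph π k).Adj p u ↔ p < u ∧ π.symm u < π.symm p := by
    rw [levelGraph_adj, hA.1 hp]
    exact ⟨fun h => h.elim And.left fun h => absurd (hA.2 h.2) hu, fun h => .inl ⟨h, rfl⟩⟩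
  have hanti {p q : Fin n} (hp : p ∈ A) (hq : q ∈ A) (h : p < q) : π.symm q < π.symm p :=
    symm_lt_symm_of_dominanceHeight_eq π ((hA.1 hp).trans (hA.1 hq).symm) h
  refine isThresholdGraph_of_nested A (fun p hp q hq hpq => ?_) (fun u hu v hv _ huv => ?_)
    fun p hp q hq u hu v hv hpu hqv => ?_
  · rcases hpq.lt_or_gt with h | h
    · exact levelGraph_adj.2 (.inl ⟨⟨h, hanti hp hq h⟩, hA.1 hp⟩)
    · exact levelGraph_adj.2 (.inr ⟨⟨h, hanti hq hp h⟩, hA.1 hq⟩)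
  · rw [coe_compl, Set.mem_compl_iff, mem_coe] at hu hv
    rcases levelGraph_adj.1 huv with ⟨-, h⟩ | ⟨-, h⟩
    exacts [hu (hA.2 h), hv (hA.2 h)]
  · rw [hcross hp hu] at hpu
    rw [hcross hq hv] at hqv
    rw [hcross hp hv, hcross hq hu]
    -- the neighbourhoods of `u` and `v` in `A` are initial segments of `A`
    rcases lt_trichotomy p q with h | rfl | h
    · exact .inl ⟨h.trans hqv.1, hqv.2.trans (hanti hp hq h)⟩
    · exact .inl hqv
    · exact .inr ⟨h.trans hpu.1, hpu.2.trans (hanti hq hp h)⟩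

lemma iSup_levelGraph :
    ⨆ a : Fin (alphaNum (permGraph n π)), levelGraph π a = permGraph n π := by
  ext i j
  rw [SimpleGraph.iSup_adj, permGraph_adj_iff]
  constructor
  · rintro ⟨a, h⟩
    rcases levelGraph_adj.1 h with ⟨h, -⟩ | ⟨h, -⟩ <;> tauto
  · rintro (h | h)
    · exact ⟨⟨_, dominanceHeight_lt_alphaNum π i⟩, levelGraph_adj.2 (.inl ⟨h, rfl⟩)⟩
    · exact ⟨⟨_, dominanceHeight_lt_alphaNum π j⟩, levelGraph_adj.2 (.inr ⟨h, rfl⟩)⟩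

lemma thresholdDim_permGraph_le : thresholdDim (permGraph n π) ≤ alphaNum (permGraph n π) :=
  Nat.sInf_le ⟨_, fun a => isThresholdGraph_levelGraph π a,
    by rw [← SimpleGraph.edgeSet_iSup, iSup_levelGraph]⟩

end Levels

/-- Theorem 5: if `G` is a permutation graph then `t(G) ≤ α(G)`. -/
theorem thresholdDim_le_alpha
    {V : Type*} [Fintype V] (G : SimpleGraph V)
    (hG : IsPermutationGraph G) :
    thresholdDim G ≤ alphaNum G := by
  obtain ⟨n, π, ⟨e⟩⟩ := hG
  rw [thresholdDim_congr e, alphaNum_congr e]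
  exact thresholdDim_permGraph_le π
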